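/- Let M = [x_{k,t}] (1 ≤ k ≤ p, 1 ≤ t ≤ n) be a p×n random matrix whose entries are independent centered real random variables in L⁴ with E[x_{k,t}²] = 1 for all k, t, and suppose all the entries have the same fourth moment m₄ = E[x_{k,t}⁴]. Then E[ ‖ (1/n) M Mᵀ − I_p ‖_F² ] = (p/n)·( p + m₄ − 2 ). -/

import Mathlib

open MeasureTheory ProbabilityTheory Filter
open scoped ENNReal NNReal Topology BigOperators

noncomputable section

/-- A function `φ : S^d → ℝ` is antisymmetric if permuting its arguments multiplies it by
the sign of the permutation. -/
def Antisymmetric' {S : Type*} {d : ℕ} (φ : (Fin d → S) → ℝ) : Prop :=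
  ∀ (x : Fin d → S) (π : Equiv.Perm (Fin d)), φ (x ∘ π) = (Equiv.Perm.sign π : ℤ) * φ x

open Classical in
/-- The φ-covariance of two vectors `u v : S^n`. -/
def covPhi {S : Type*} {d n : ℕ} (φ : (Fin d → S) → ℝ) (u v : Fin n → S) : ℝ :=
  (n.choose d : ℝ)⁻¹ *
    ∑ f ∈ Finset.univ.filter (fun f : Fin d → Fin n => StrictMono f),
      φ (u ∘ f) * φ (v ∘ f)

/-- The φ-correlation of two vectors. -/
def corPhi {S : Type*} {d n : ℕ} (φ : (Fin d → S) → ℝ) (u v : Fin n → S) : ℝ :=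
  covPhi φ u v / Real.sqrt (covPhi φ u u * covPhi φ v v)

/-- `phiBar φ μ x = E[φ(x, 𝒳₂, …, 𝒳_d)]` where `𝒳₂, …, 𝒳_d` are i.i.d. with law `μ`. -/
def phiBar {S : Type*} [MeasurableSpace S] {d : ℕ} (φ : (Fin d → S) → ℝ)
    (μ : MeasureTheory.Measure S) (x : S) : ℝ :=
  ∫ y : Fin d → S, φ (fun j => if (j : ℕ) = 0 then x else y j) ∂(Measure.pi fun _ => μ)

/-- Squared Frobenius norm of a matrix. -/
def frobSq {p : ℕ} (M : Matrix (Fin p) (Fin p) ℝ) : ℝ :=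
  ∑ k, ∑ l, (M k l) ^ 2

/-- Empirical spectral distribution of a (Hermitian) real matrix: the uniform probability
measure on its eigenvalues. (Junk value `0` if the matrix is not Hermitian.) -/
def ESD {p : ℕ} (M : Matrix (Fin p) (Fin p) ℝ) : MeasureTheory.Measure ℝ :=
  if h : M.IsHermitian then
    (p : ℝ≥0∞)⁻¹ • ∑ i : Fin p, MeasureTheory.Measure.dirac (h.eigenvalues i)
  else 0

/-- The Marčenko–Pastur distribution with parameter `q ≥ 0`. -/
def MP (q : ℝ) : MeasureTheory.Measure ℝ :=
  if q = 0 then MeasureTheory.Measure.dirac 1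
  else
    (MeasureTheory.volume.withDensity fun x =>
        ENNReal.ofReal
          (Set.indicator (Set.Icc ((1 - Real.sqrt q) ^ 2) ((1 + Real.sqrt q) ^ 2))
            (fun x =>
              Real.sqrt (((1 + Real.sqrt q) ^ 2 - x) * (x - (1 - Real.sqrt q) ^ 2)) /
                (2 * Real.pi * q * x)) x))
      + (if 1 < q then ENNReal.ofReal (1 - q⁻¹) • MeasureTheory.Measure.dirac 0 else 0)

/-- `MPaff q α β` is the push-forward of `MP q` by `x ↦ α x + β`. -/
def MPaff (q α β : ℝ) : MeasureTheory.Measure ℝ :=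
  (MP q).map (fun x => α * x + β)

/-- A sequence of random probability measures on ℝ (defined on varying probability spaces)
converges weakly in probability to a deterministic measure `ν`. -/
def TendstoWeaklyInProbability {Ω : ℕ → Type*} [∀ n, MeasurableSpace (Ω n)]
    (P : ∀ n, MeasureTheory.Measure (Ω n)) (μ : ∀ n, Ω n → MeasureTheory.Measure ℝ)
    (ν : MeasureTheory.Measure ℝ) : Prop :=
  ∀ f : BoundedContinuousFunction ℝ ℝ, ∀ ε > (0 : ℝ),
    Tendsto (fun n => P n {ω | ε ≤ |(∫ x, f x ∂(μ n ω)) - ∫ x, f x ∂ν|}) atTop (𝓝 0)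

/-! The `(k, l)` entry of `n⁻¹ M Mᵀ - I` is `n⁻¹ S_kl - δ_kl` with `S_kl = ∑_t x_kt x_lt`.
Since `E[S_kl] = n δ_kl`, its expected square is `n⁻² Var[S_kl]`. For fixed `k, l` the summands
`x_kt x_lt` are independent in `t`, with variance `m₄ - 1` if `k = l` and `1` otherwise, so
`Var[S_kl] = n (m₄ - 1)` or `n`. Summing over the `p` diagonal and `p (p - 1)` off-diagonal
entries gives `p (m₄ - 1) / n + p (p - 1) / n`. -/

open scoped Matrix

lemma frobSq_smul_mul_transpose_sub_one {p : ℕ} {τ : Type*} [Fintype τ] (c : ℝ)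
    (A : Matrix (Fin p) τ ℝ) :
    frobSq (c • (A * Aᵀ) - 1) =
      ∑ k, ∑ l, (c * ∑ t, A k t * A l t - if k = l then 1 else 0) ^ 2 := by
  simp only [frobSq, Matrix.sub_apply, Matrix.smul_apply, Matrix.mul_apply, Matrix.one_apply,
    Matrix.transpose_apply, smul_eq_mul]

lemma Fintype.sum_sum_ite_eq {ι R : Type*} [Fintype ι] [DecidableEq ι] [CommRing R] (a b : R) :
    ∑ i : ι, ∑ j : ι, (if i = j then a else b) =
      Fintype.card ι * (a + (Fintype.card ι - 1) * b) := by
  have hsplit (i j : ι) : (if i = j then a else b) = b + if i = j then a - b else 0 := by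
    split_ifs <;> ring
  simp only [hsplit, Finset.sum_add_distrib, Finset.sum_ite_eq, Finset.mem_univ, if_true,
    Finset.sum_const, Finset.card_univ, nsmul_eq_mul]
  ring

lemma ENNReal.inv_four_add_inv_four : (4 : ℝ≥0∞)⁻¹ + 4⁻¹ = 2⁻¹ := by
  rw [show (4 : ℝ≥0∞) = 2 * 2 by norm_num, ENNReal.mul_inv (by simp) (by simp),
    ← div_eq_mul_inv, ENNReal.add_halves]

structure IsWhiteNoise {κ τ Ω : Type*} [MeasurableSpace Ω] (x : κ → τ → Ω → ℝ)
    (μ : Measure Ω) : Prop where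
  indep : iIndepFun (fun kt : κ × τ => x kt.1 kt.2) μ
  memLp_four : ∀ k t, MemLp (x k t) 4 μ
  integral_eq_zero : ∀ k t, ∫ ω, x k t ω ∂μ = 0
  integral_sq_eq_one : ∀ k t, ∫ ω, x k t ω ^ 2 ∂μ = 1

namespace IsWhiteNoise

variable {κ τ Ω : Type*} [MeasurableSpace Ω] {μ : Measure Ω} {x : κ → τ → Ω → ℝ}

lemma memLp_two_mul (hx : IsWhiteNoise x μ) (k l : κ) (t : τ) :
    MemLp (x k t * x l t) 2 μ :=
  haveI : ENNReal.HolderTriple 4 4 2 := ⟨ENNReal.inv_four_add_inv_four⟩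
  (hx.memLp_four l t).mul (hx.memLp_four k t)

lemma indepFun_of_ne (hx : IsWhiteNoise x μ) {k l : κ} (hkl : k ≠ l) (t : τ) :
    IndepFun (x k t) (x l t) μ :=
  hx.indep.indepFun (i := (k, t)) (j := (l, t)) (by simp [hkl])

lemma indepFun_mul_mul (hx : IsWhiteNoise x μ) (k l : κ) {t s : τ} (hts : t ≠ s) :
    IndepFun (x k t * x l t) (x k s * x l s) μ :=
  hx.indep.indepFun_mul_mul₀ (fun i => (hx.memLp_four i.1 i.2).aemeasurable)
    (k, t) (l, t) (k, s) (l, s) (by simp [hts]) (by simp [hts]) (by simp [hts]) (by simp [hts])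

lemma integral_mul [DecidableEq κ] (hx : IsWhiteNoise x μ) (k l : κ) (t : τ) :
    ∫ ω, x k t ω * x l t ω ∂μ = if k = l then 1 else 0 := by
  split_ifs with hkl
  · subst hkl
    simpa [sq] using hx.integral_sq_eq_one k t
  · rw [(hx.indepFun_of_ne hkl t).integral_fun_mul_eq_mul_integral
      (hx.memLp_four k t).aestronglyMeasurable (hx.memLp_four l t).aestronglyMeasurable,
      hx.integral_eq_zero, zero_mul]

lemma integral_mul_sq [DecidableEq κ] (hx : IsWhiteNoise x μ) (k l : κ) (t : τ) :
    ∫ ω, (x k t ω * x l t ω) ^ 2 ∂μ = if k = l then ∫ ω, x k t ω ^ 4 ∂μ else 1 := by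
  split_ifs with hkl
  · subst hkl
    congr with ω
    ring
  · have hsq : IndepFun (fun ω => x k t ω ^ 2) (fun ω => x l t ω ^ 2) μ :=
      (hx.indepFun_of_ne hkl t).comp (measurable_id.pow_const 2) (measurable_id.pow_const 2)
    simp_rw [mul_pow]
    rw [hsq.integral_fun_mul_eq_mul_integral ((hx.memLp_four k t).aestronglyMeasurable.pow 2)
      ((hx.memLp_four l t).aestronglyMeasurable.pow 2), hx.integral_sq_eq_one,
      hx.integral_sq_eq_one, one_mul]

lemma variance_mul [DecidableEq κ] [IsProbabilityMeasure μ] (hx : IsWhiteNoise x μ) (k l : κ)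
    (t : τ) : Var[x k t * x l t; μ] = if k = l then ∫ ω, x k t ω ^ 4 ∂μ - 1 else 1 := by
  rw [variance_eq_sub (hx.memLp_two_mul k l t)]
  simp only [Pi.pow_apply, Pi.mul_apply, hx.integral_mul_sq, hx.integral_mul]
  split_ifs <;> norm_num

section GramEntry

variable [Fintype τ]

lemma memLp_two_gram_entry (hx : IsWhiteNoise x μ) (k l : κ) :
    MemLp (fun ω => ∑ t, x k t ω * x l t ω) 2 μ :=
  memLp_finsetSum _ fun t _ => hx.memLp_two_mul k l t

lemma integrable_sq_gram_entry_sub [IsFiniteMeasure μ] (hx : IsWhiteNoise x μ) (c d : ℝ)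
    (k l : κ) :
    Integrable (fun ω => (c * ∑ t, x k t ω * x l t ω - d) ^ 2) μ :=
  (((hx.memLp_two_gram_entry k l).const_mul c).sub (memLp_const d)).integrable_sq

lemma variance_gram_entry [DecidableEq κ] [IsProbabilityMeasure μ] (hx : IsWhiteNoise x μ)
    {m₄ : ℝ} (hm₄ : ∀ k t, ∫ ω, x k t ω ^ 4 ∂μ = m₄) (k l : κ) :
    Var[fun ω => ∑ t, x k t ω * x l t ω; μ] =
      Fintype.card τ * if k = l then m₄ - 1 else 1 := by
  have hsum : (fun ω => ∑ t, x k t ω * x l t ω) = ∑ t, x k t * x l t := by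
    ext ω
    simp only [Finset.sum_apply, Pi.mul_apply]
  rw [hsum, IndepFun.variance_sum (fun t _ => hx.memLp_two_mul k l t)
    fun t _ s _ hts => hx.indepFun_mul_mul k l hts]
  simp only [hx.variance_mul, hm₄, Finset.sum_const, Finset.card_univ, nsmul_eq_mul]

lemma integral_sq_gram_entry_sub [DecidableEq κ] [Nonempty τ] [IsProbabilityMeasure μ]
    (hx : IsWhiteNoise x μ) {m₄ : ℝ} (hm₄ : ∀ k t, ∫ ω, x k t ω ^ 4 ∂μ = m₄) (k l : κ) :
    ∫ ω, ((Fintype.card τ : ℝ)⁻¹ * ∑ t, x k t ω * x l t ω - if k = l then 1 else 0) ^ 2 ∂μ =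
      (if k = l then m₄ - 1 else 1) / Fintype.card τ := by
  have hmean : ∫ ω, (Fintype.card τ : ℝ)⁻¹ * ∑ t, x k t ω * x l t ω ∂μ =
      if k = l then 1 else 0 := by
    rw [integral_const_mul, integral_finsetSum (f := fun t ω => x k t ω * x l t ω) _
      fun t _ => (hx.memLp_two_mul k l t).integrable one_le_two]
    simp [hx.integral_mul]
  calc _ = Var[fun ω => (Fintype.card τ : ℝ)⁻¹ * ∑ t, x k t ω * x l t ω; μ] := by
        rw [variance_eq_integral ((hx.memLp_two_gram_entry k l).const_mul _).aemeasurable, hmean]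
    _ = _ := by
        rw [variance_const_mul, hx.variance_gram_entry hm₄]
        field_simp

end GramEntry

end IsWhiteNoise

theorem white_noise_covariance_frobenius_eq_general
    (pp n : ℕ) (hn : 0 < n)
    (Ω : Type) [MeasurableSpace Ω] (P : Measure Ω) [IsProbabilityMeasure P]
    (x : Fin pp → Fin n → Ω → ℝ)
    (hindep : iIndepFun
      (fun (kt : Fin pp × Fin n) ω => x kt.1 kt.2 ω) P)
    (hL4 : ∀ k t, MemLp (x k t) 4 P)
    (hcent : ∀ k t, ∫ ω, x k t ω ∂P = 0)
    (hvar : ∀ k t, ∫ ω, (x k t ω) ^ 2 ∂P = 1)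
    (m₄ : ℝ) (hm₄ : ∀ k t, ∫ ω, (x k t ω) ^ 4 ∂P = m₄) :
    (∫ ω, frobSq ((n : ℝ)⁻¹ •
        (Matrix.of (fun k t => x k t ω) * Matrix.transpose (Matrix.of (fun k t => x k t ω))) - 1) ∂P)
      = ((pp : ℝ) / n) * ((pp : ℝ) + m₄ - 2) := by
  have hx : IsWhiteNoise x P := ⟨hindep, hL4, hcent, hvar⟩
  have : Nonempty (Fin n) := ⟨⟨0, hn⟩⟩
  have hint := hx.integrable_sq_gram_entry_sub (n : ℝ)⁻¹
  have hentry (k l : Fin pp) := hx.integral_sq_gram_entry_sub hm₄ k l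
  simp only [Fintype.card_fin] at hentry
  calc _ = ∑ k, ∑ l,
          ∫ ω, ((n : ℝ)⁻¹ * ∑ t, x k t ω * x l t ω - if k = l then 1 else 0) ^ 2 ∂P := by
        simp_rw [frobSq_smul_mul_transpose_sub_one, Matrix.of_apply]
        rw [integral_finsetSum _ fun k _ => integrable_finsetSum _ fun l _ => hint _ k l]
        exact Finset.sum_congr rfl fun k _ => integral_finsetSum _ fun l _ => hint _ k l
    _ = ∑ k : Fin pp, ∑ l : Fin pp, (if k = l then m₄ - 1 else 1) / n := by
        simp only [hentry]
    _ = _ := by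
        simp only [← Finset.sum_div, Fintype.sum_sum_ite_eq, Fintype.card_fin]
        ring

/-- equality version of the white-noise Frobenius computation, when all entries
share the same fourth moment. -/
theorem white_noise_covariance_frobenius_eq
    (pp n : ℕ) (hp : 0 < pp) (hn : 0 < n)
    (Ω : Type) [MeasurableSpace Ω] (P : Measure Ω) [IsProbabilityMeasure P]
    (x : Fin pp → Fin n → Ω → ℝ)
    (hmeas : ∀ k t, Measurable (x k t))
    (hindep : iIndepFun
      (fun (kt : Fin pp × Fin n) ω => x kt.1 kt.2 ω) P)
    (hL4 : ∀ k t, MemLp (x k t) 4 P)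
    (hcent : ∀ k t, ∫ ω, x k t ω ∂P = 0)
    (hvar : ∀ k t, ∫ ω, (x k t ω) ^ 2 ∂P = 1)
    (m₄ : ℝ) (hm₄ : ∀ k t, ∫ ω, (x k t ω) ^ 4 ∂P = m₄) :
    (∫ ω, frobSq ((n : ℝ)⁻¹ •
        (Matrix.of (fun k t => x k t ω) * Matrix.transpose (Matrix.of (fun k t => x k t ω))) - 1) ∂P)
      = ((pp : ℝ) / n) * ((pp : ℝ) + m₄ - 2) :=
  white_noise_covariance_frobenius_eq_general pp n hn Ω P x hindep hL4 hcent hvar m₄ hm₄
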